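/- For arbitrary real data ū_0, ū_2, ū_3, ū_5, ū_9, ū_{11}, the coefficients c_1 = [4(ū_5−ū_0) − (ū_{11}−ū_0)]/(2Δx), c_2 = [4(ū_2−ū_0) − (ū_9−ū_0)]/(2Δy), c_3 = [ū_{11} + ū_0 − 2ū_5]/(2Δx²), c_4 = [ū_9 + ū_0 − 2ū_2]/(2Δy²), c_5 = [(ū_3−ū_2) − (ū_5−ū_0)]/(ΔxΔy) are the unique solution of the five interpolation equations Σ_{k=1}^{5} c_k ⟨φ_k⟩_{Ω_j} = ū_j − ū_0 for j ∈ {2, 3, 5, 9, 11}; that is, the quadratic polynomial P_1^{(2)} = ū_0 + Σ_{k=1}^5 c_k φ_k is the unique degree-2 polynomial with cell average ū_0 on Ω_0 and cell averages ū_j on Ω_j for j ∈ {2,3,5,9,11}. -/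
import Mathlib


open MeasureTheory intervalIntegral

/-- Cell average of `f` over the rectangle of size `dx × dy` centered at `(xc, yc)`. -/
noncomputable def cellAvg (xc yc dx dy : ℝ) (f : ℝ → ℝ → ℝ) : ℝ :=
  (dx * dy)⁻¹ *
    ∫ x in (xc - dx / 2)..(xc + dx / 2),
      ∫ y in (yc - dy / 2)..(yc + dy / 2), f x y

/-- Basis polynomials `φ_1, …, φ_5` (all with zero cell average over `Ω_0`). -/
noncomputable def phi5 (x0 y0 dx dy : ℝ) : Fin 5 → ℝ → ℝ → ℝ :=
  ![fun x _ => x - x0,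
    fun _ y => y - y0,
    fun x _ => (x - x0) ^ 2 - dx ^ 2 / 12,
    fun _ y => (y - y0) ^ 2 - dy ^ 2 / 12,
    fun x y => (x - x0) * (y - y0)]

/-- Offsets (in units of `Δx`, `Δy`) of the centers of the substencil cells
`Ω_2, Ω_3, Ω_5, Ω_9, Ω_11` used by the quadratic polynomial `P_1^{(2)}`. -/
def offP1 : Fin 5 → ℝ × ℝ := ![(0, 1), (1, 1), (1, 0), (0, 2), (2, 0)]

lemma int_lin (a b x0 : ℝ) : ∫ x in a..b, (x - x0) = ((b-x0)^2 - (a-x0)^2)/2 := by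
  rw [intervalIntegral.integral_comp_sub_right (fun x => x) x0, integral_id]

lemma int_quad (a b x0 c : ℝ) : ∫ x in a..b, ((x - x0)^2 - c) = ((b-x0)^3 - (a-x0)^3)/3 - (b-a)*c := by
  rw [intervalIntegral.integral_comp_sub_right (fun x => x^2 - c) x0,
      intervalIntegral.integral_sub (intervalIntegral.intervalIntegrable_pow 2) intervalIntegrable_const,
      integral_pow, intervalIntegral.integral_const, smul_eq_mul]
  push_cast
  ring

lemma avgk (x0 y0 xc yc dx dy : ℝ) (hdx : dx ≠ 0) (hdy : dy ≠ 0) (k : Fin 5) :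
    cellAvg xc yc dx dy (phi5 x0 y0 dx dy k) =
      ![xc - x0, yc - y0, (xc - x0)^2, (yc - y0)^2, (xc - x0)*(yc - y0)] k := by
  fin_cases k
  · show cellAvg xc yc dx dy (fun x _ => x - x0) = xc - x0
    unfold cellAvg
    rw [show (fun x => ∫ y in (yc - dy/2)..(yc + dy/2), (x - x0)) = fun x => dy * (x - x0) by
      funext x; rw [intervalIntegral.integral_const, smul_eq_mul]; ring]
    rw [intervalIntegral.integral_const_mul, int_lin]; field_simp; ring
  · show cellAvg xc yc dx dy (fun _ y => y - y0) = yc - y0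
    unfold cellAvg
    simp only [int_lin]
    rw [intervalIntegral.integral_const, smul_eq_mul]; field_simp; ring
  · show cellAvg xc yc dx dy (fun x _ => (x - x0)^2 - dx^2/12) = (xc - x0)^2
    unfold cellAvg
    rw [show (fun x => ∫ y in (yc - dy/2)..(yc + dy/2), ((x - x0)^2 - dx^2/12))
        = fun x => dy * ((x - x0)^2 - dx^2/12) by
      funext x; rw [intervalIntegral.integral_const, smul_eq_mul]; ring]
    rw [intervalIntegral.integral_const_mul, int_quad]; field_simp; ring
  · show cellAvg xc yc dx dy (fun _ y => (y - y0)^2 - dy^2/12) = (yc - y0)^2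
    unfold cellAvg
    simp only [int_quad]
    rw [intervalIntegral.integral_const, smul_eq_mul]; field_simp; ring
  · show cellAvg xc yc dx dy (fun x y => (x - x0) * (y - y0)) = (xc - x0) * (yc - y0)
    unfold cellAvg
    simp only [intervalIntegral.integral_const_mul, int_lin]
    rw [intervalIntegral.integral_mul_const, int_lin]; field_simp; ring

/-- the explicit coefficients `c_1, …, c_5` of the quadratic
polynomial `P_1^{(2)}` of the P3/P2 reconstruction are the unique solution of
the five interpolation equations `∑_k c_k ⟨φ_k⟩_{Ω_j} = ū_j − ū_0` for
`j ∈ {2, 3, 5, 9, 11}`. -/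
theorem cweno4_P1_quadratic_interpolation_unique
    (x0 y0 dx dy : ℝ) (hdx : 0 < dx) (hdy : 0 < dy)
    (u0 u2 u3 u5 u9 u11 : ℝ) :
    let A : Fin 5 → Fin 5 → ℝ := fun j k =>
      cellAvg (x0 + (offP1 j).1 * dx) (y0 + (offP1 j).2 * dy) dx dy
        (phi5 x0 y0 dx dy k)
    let b : Fin 5 → ℝ := ![u2 - u0, u3 - u0, u5 - u0, u9 - u0, u11 - u0]
    let c : Fin 5 → ℝ :=
      ![(4 * (u5 - u0) - (u11 - u0)) / (2 * dx),
        (4 * (u2 - u0) - (u9 - u0)) / (2 * dy),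
        (u11 + u0 - 2 * u5) / (2 * dx ^ 2),
        (u9 + u0 - 2 * u2) / (2 * dy ^ 2),
        ((u3 - u2) - (u5 - u0)) / (dx * dy)]
    (∀ j : Fin 5, ∑ k, c k * A j k = b j) ∧
    (∀ c' : Fin 5 → ℝ, (∀ j : Fin 5, ∑ k, c' k * A j k = b j) → c' = c) := by
  intro A b c
  have hA : ∀ j k : Fin 5, A j k =
      ![(offP1 j).1 * dx, (offP1 j).2 * dy, ((offP1 j).1 * dx)^2, ((offP1 j).2 * dy)^2,
        ((offP1 j).1 * dx) * ((offP1 j).2 * dy)] k := by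
    intro j k
    rw [show A j k = cellAvg (x0 + (offP1 j).1 * dx) (y0 + (offP1 j).2 * dy) dx dy
        (phi5 x0 y0 dx dy k) from rfl, avgk x0 y0 _ _ dx dy hdx.ne' hdy.ne']
    fin_cases k <;> simp
  constructor
  · intro j
    simp only [Fin.sum_univ_five, hA]
    fin_cases j <;>
      · simp [offP1, b, c]
        field_simp
        ring
  · intro c' h
    have h0 := h 0; have h1 := h 1; have h2 := h 2; have h3 := h 3; have h4 := h 4
    simp only [Fin.sum_univ_five, hA] at h0 h1 h2 h3 h4
    simp [offP1, b] at h0 h1 h2 h3 h4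
    funext k
    fin_cases k
    · show c' 0 = (4 * (u5 - u0) - (u11 - u0)) / (2 * dx)
      field_simp; linear_combination 4 * h2 - h4
    · show c' 1 = (4 * (u2 - u0) - (u9 - u0)) / (2 * dy)
      field_simp; linear_combination 4 * h0 - h3
    · show c' 2 = (u11 + u0 - 2 * u5) / (2 * dx ^ 2)
      field_simp; linear_combination h4 - 2 * h2
    · show c' 3 = (u9 + u0 - 2 * u2) / (2 * dy ^ 2)
      field_simp; linear_combination h3 - 2 * h0
    · show c' 4 = ((u3 - u2) - (u5 - u0)) / (dx * dy)
      field_simp; linear_combination h1 - h0 - h2
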